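/- arXiv:1909.08222 — 4 statements merged into one kernel-verified Lean document; each statement's English description precedes it below -/
import Mathlib

section
/- The function ψ is concave on ℝ^p: for all x, y ∈ ℝ^p and all λ ∈ [0,1], ψ(λx + (1−λ)y) ≥ λψ(x) + (1−λ)ψ(y). -/
/-!
The signed distance `d(x, sᶜ) - d(x, s)` to a nonempty set `s ≠ univ` is the supremum of
`r - d(x, y)` over the balls `B(y, r) ⊆ s` with centre `y ∈ s`. When `s` is convex, these
inscribed balls are closed under convex combinations of centres and radii, and
`(x, y, r) ↦ r - d(x, y)` is jointly concave, so the signed distance is concave. Here `E` is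
convex, and `ψ` is its signed distance composed with a translation.
-/

open Metric Set

namespace Metric

section PseudoMetricSpace

variable {α : Type*} [PseudoMetricSpace α] {s : Set α}

noncomputable def signedInfDist (x : α) (s : Set α) : ℝ := infDist x sᶜ - infDist x s

theorem exists_ball_subset_signedInfDist_lt (hs : s.Nonempty) (x : α) {ε : ℝ} (hε : 0 < ε) :
    ∃ y r, y ∈ s ∧ 0 ≤ r ∧ ball y r ⊆ s ∧ signedInfDist x s < r - dist x y + ε := by
  by_cases hx : x ∈ s
  · refine ⟨x, infDist x sᶜ, hx, infDist_nonneg, ball_infDist_compl_subset, ?_⟩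
    simp [signedInfDist, infDist_zero_of_mem hx, hε]
  · obtain ⟨y, hy, hxy⟩ := (infDist_lt_iff hs).1 (lt_add_of_pos_right (infDist x s) hε)
    refine ⟨y, 0, hy, le_rfl, by simp, ?_⟩
    rw [signedInfDist, infDist_zero_of_mem (Set.mem_compl hx)]
    linarith

end PseudoMetricSpace

variable {E : Type*} [NormedAddCommGroup E] [NormedSpace ℝ E] {s : Set E}

theorem infDist_le_dist_sub_of_ball_subset {x y : E} {r : ℝ} (hy : y ∈ s)
    (hball : ball y r ⊆ s) (hr : r ≤ dist x y) : infDist x s ≤ dist x y - r := by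
  rcases le_or_gt r 0 with hr0 | hr0
  · linarith [infDist_le_dist_of_mem (x := x) hy]
  set z := AffineMap.lineMap y x (r / dist x y)
  have hd : 0 < dist x y := hr0.trans_le hr
  have hz : z ∈ closure s := by
    refine closure_mono hball ((closure_ball y hr0.ne').symm ▸ mem_closedBall.2 (le_of_eq ?_))
    rw [dist_lineMap_left, Real.norm_of_nonneg (by positivity), dist_comm y x,
      div_mul_cancel₀ _ hd.ne']
  calc infDist x s = infDist x (closure s) := infDist_closure.symm
    _ ≤ dist x z := infDist_le_dist_of_mem hz
    _ = dist x y - r := by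
      rw [dist_comm, dist_lineMap_right, dist_comm y,
        Real.norm_of_nonneg (sub_nonneg.2 ((div_le_one hd).2 hr))]
      field_simp

theorem sub_dist_le_signedInfDist (hs : sᶜ.Nonempty) {x y : E} {r : ℝ} (hy : y ∈ s)
    (hball : ball y r ⊆ s) : r - dist x y ≤ signedInfDist x s := by
  have hry : r ≤ infDist y sᶜ :=
    (le_infDist hs).2 fun z hz => not_lt.1 fun h => hz (hball (mem_ball'.2 h))
  have hlip : infDist y sᶜ ≤ infDist x sᶜ + dist x y :=
    dist_comm y x ▸ infDist_le_infDist_add_dist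
  rw [signedInfDist]
  rcases lt_or_ge (dist x y) r with hxy | hxy
  · rw [infDist_zero_of_mem (hball (mem_ball.2 hxy))]
    linarith
  · linarith [infDist_le_dist_sub_of_ball_subset hy hball hxy,
      infDist_nonneg (x := x) (s := sᶜ)]

theorem add_smul_mem_of_ball_subset {y v : E} {r ρ : ℝ} (hy : y ∈ s) (hball : ball y r ⊆ s)
    (hr : 0 ≤ r) (hv : ‖v‖ < ρ) : y + (r / ρ) • v ∈ s := by
  rcases hr.eq_or_lt with rfl | hr
  · simpa using hy
  apply hball
  have hρ : 0 < ρ := (norm_nonneg v).trans_lt hv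
  rw [mem_ball, dist_eq_norm, add_sub_cancel_left, norm_smul_of_nonneg (by positivity)]
  calc r / ρ * ‖v‖ < r / ρ * ρ := by gcongr
    _ = r := by field_simp

theorem _root_.Convex.ball_combo_subset (hconv : Convex ℝ s) {y₁ y₂ : E} {r₁ r₂ μ ν : ℝ}
    (hy₁ : y₁ ∈ s) (hy₂ : y₂ ∈ s) (hr₁ : 0 ≤ r₁) (hr₂ : 0 ≤ r₂)
    (hball₁ : ball y₁ r₁ ⊆ s) (hball₂ : ball y₂ r₂ ⊆ s)
    (hμ : 0 ≤ μ) (hν : 0 ≤ ν) (hμν : μ + ν = 1) :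
    ball (μ • y₁ + ν • y₂) (μ * r₁ + ν * r₂) ⊆ s := by
  intro z hz
  set ρ := μ * r₁ + ν * r₂
  set v := z - (μ • y₁ + ν • y₂)
  have hv : ‖v‖ < ρ := by rwa [mem_ball, dist_eq_norm] at hz
  have hρ : 0 < ρ := (norm_nonneg v).trans_lt hv
  -- Shift each centre by the same vector, rescaled to its own radius.
  have hz : z = μ • (y₁ + (r₁ / ρ) • v) + ν • (y₂ + (r₂ / ρ) • v) := by
    have hcoef : μ * (r₁ / ρ) + ν * (r₂ / ρ) = 1 := by
      rw [← mul_div_assoc, ← mul_div_assoc, ← add_div, div_self hρ.ne']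
    calc z = μ • y₁ + ν • y₂ + (μ * (r₁ / ρ) + ν * (r₂ / ρ)) • v := by
          rw [hcoef, one_smul, add_sub_cancel]
      _ = _ := by module
  rw [hz]
  exact hconv (add_smul_mem_of_ball_subset hy₁ hball₁ hr₁ hv)
    (add_smul_mem_of_ball_subset hy₂ hball₂ hr₂ hv) hμ hν hμν

theorem _root_.Convex.concaveOn_signedInfDist (hconv : Convex ℝ s) :
    ConcaveOn ℝ univ fun x => signedInfDist x s := by
  have hzero : ConcaveOn ℝ univ fun _ : E => (0 : ℝ) := concaveOn_const 0 convex_univ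
  obtain rfl | hs := s.eq_empty_or_nonempty
  · simpa [signedInfDist, infDist_zero_of_mem] using hzero
  obtain hsc | hsc := sᶜ.eq_empty_or_nonempty
  · simpa [signedInfDist, compl_empty_iff.1 hsc, infDist_zero_of_mem] using hzero
  refine ⟨convex_univ, fun a _ b _ μ ν hμ hν hμν => le_of_forall_pos_le_add fun ε hε => ?_⟩
  obtain ⟨y₁, r₁, hy₁, hr₁, hball₁, ha⟩ := exists_ball_subset_signedInfDist_lt hs a hε
  obtain ⟨y₂, r₂, hy₂, hr₂, hball₂, hb⟩ := exists_ball_subset_signedInfDist_lt hs b hε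
  have hdist : dist (μ • a + ν • b) (μ • y₁ + ν • y₂) ≤ μ * dist a y₁ + ν * dist b y₂ := by
    grw [dist_add_add_le, dist_smul₀, dist_smul₀, Real.norm_of_nonneg hμ,
      Real.norm_of_nonneg hν]
  calc μ • signedInfDist a s + ν • signedInfDist b s
      ≤ μ * (r₁ - dist a y₁ + ε) + ν * (r₂ - dist b y₂ + ε) := by
        simp only [smul_eq_mul]; gcongr
    _ = (μ * r₁ + ν * r₂) - (μ * dist a y₁ + ν * dist b y₂) + ε := by
        linear_combination ε * hμν
    _ ≤ (μ * r₁ + ν * r₂) - dist (μ • a + ν • b) (μ • y₁ + ν • y₂) + ε := by gcongr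
    _ ≤ signedInfDist (μ • a + ν • b) s + ε := by
        gcongr
        exact sub_dist_le_signedInfDist hsc (hconv hy₁ hy₂ hμ hν hμν)
          (hconv.ball_combo_subset hy₁ hy₂ hr₁ hr₂ hball₁ hball₂ hμ hν hμν)

end Metric

theorem convex_setOf_exists_sum_smul_add {ι V : Type*} [Fintype ι] [AddCommGroup V]
    [Module ℝ V] (v : ι → V) {K : Set V} (hK : Convex ℝ K) :
    Convex ℝ {z | ∃ (lam : ι → ℝ) (r : V),
      (∀ j, 0 ≤ lam j) ∧ r ∈ K ∧ z = ∑ j, lam j • v j + r} := by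
  rintro _ ⟨l₁, r₁, hl₁, hr₁, rfl⟩ _ ⟨l₂, r₂, hl₂, hr₂, rfl⟩ μ ν hμ hν hμν
  refine ⟨μ • l₁ + ν • l₂, μ • r₁ + ν • r₂, fun j => ?_, hK hr₁ hr₂ hμ hν hμν, ?_⟩
  · simp only [Pi.add_apply, Pi.smul_apply, smul_eq_mul]
    have := hl₁ j; have := hl₂ j; positivity
  · simp only [Pi.add_apply, Pi.smul_apply, smul_eq_mul, add_smul, mul_smul,
      Finset.sum_add_distrib, ← Finset.smul_sum]
    module

theorem convex_setOf_forall_nonneg_apply (p : ℕ) :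
    Convex ℝ {r : EuclideanSpace ℝ (Fin p) | ∀ i, 0 ≤ r i} := by
  intro r₁ hr₁ r₂ hr₂ μ ν hμ hν _ i
  have := hr₁ i; have := hr₂ i
  simp only [PiLp.add_apply, PiLp.smul_apply, smul_eq_mul]
  positivity

theorem stmt_2_general (p t : ℕ)
    (x : Fin t → EuclideanSpace ℝ (Fin p)) (xk : EuclideanSpace ℝ (Fin p))
    (E : Set (EuclideanSpace ℝ (Fin p)))
    (hE : E = {z | ∃ (lam : Fin t → ℝ) (r : EuclideanSpace ℝ (Fin p)),
        (∀ j, 0 ≤ lam j) ∧ (∀ i, 0 ≤ r i) ∧ z = (∑ j, lam j • (x j - xk)) + r})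
    (ψ : EuclideanSpace ℝ (Fin p) → ℝ)
    (hψ : ∀ z, ψ z = Metric.infDist (z - xk) Eᶜ - Metric.infDist (z - xk) E) :
    ∀ (a b : EuclideanSpace ℝ (Fin p)) (lam : ℝ), 0 ≤ lam → lam ≤ 1 →
      lam * ψ a + (1 - lam) * ψ b ≤ ψ (lam • a + (1 - lam) • b) := by
  intro a b lam h0 h1
  have hconv : Convex ℝ E :=
    hE ▸ convex_setOf_exists_sum_smul_add (fun j => x j - xk) (convex_setOf_forall_nonneg_apply p)
  have hconc := hconv.concaveOn_signedInfDist.2 (mem_univ (a - xk)) (mem_univ (b - xk)) h0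
    (sub_nonneg.2 h1) (add_sub_cancel lam 1)
  rw [hψ, hψ, hψ, show lam • a + (1 - lam) • b - xk = lam • (a - xk) + (1 - lam) • (b - xk) by
    module]
  simpa only [signedInfDist, smul_eq_mul] using hconc

/-- ψ is concave on ℝ^p. -/
theorem stmt_2 (p t : ℕ) (hp : 1 ≤ p) (ht : 1 ≤ t)
    (x : Fin t → EuclideanSpace ℝ (Fin p)) (xk : EuclideanSpace ℝ (Fin p))
    (E : Set (EuclideanSpace ℝ (Fin p)))
    (hE : E = {z | ∃ (lam : Fin t → ℝ) (r : EuclideanSpace ℝ (Fin p)),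
        (∀ j, 0 ≤ lam j) ∧ (∀ i, 0 ≤ r i) ∧ z = (∑ j, lam j • (x j - xk)) + r})
    (hEne : E ≠ Set.univ)
    (ψ : EuclideanSpace ℝ (Fin p) → ℝ)
    (hψ : ∀ z, ψ z = Metric.infDist (z - xk) Eᶜ - Metric.infDist (z - xk) E) :
    ∀ (a b : EuclideanSpace ℝ (Fin p)) (lam : ℝ), 0 ≤ lam → lam ≤ 1 →
      lam * ψ a + (1 - lam) * ψ b ≤ ψ (lam • a + (1 - lam) • b) :=
  stmt_2_general p t x xk E hE ψ hψ
end

section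
/- The function ψ is increasing with respect to the cone E: for all x_1, x_2 ∈ ℝ^p, if x_2 − x_1 ∈ E then ψ(x_1) ≤ ψ(x_2). -/
/-!
`E` is closed under addition, so for `d ∈ E` the translate `d + E` lies in `E` and `Eᶜ - d` lies
in `Eᶜ`. Since distances are translation invariant, moving the point by `d` can only decrease the
distance to `E` and increase the distance to `Eᶜ`.
-/

open Metric Set Pointwise

theorem neg_vadd_compl_subset {G : Type*} [AddGroup G] {s : Set G} {d : G} (h : d +ᵥ s ⊆ s) :
    -d +ᵥ sᶜ ⊆ sᶜ := by
  rintro _ ⟨y, hy, rfl⟩ hmem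
  exact hy (by simpa using h (vadd_mem_vadd_set (a := d) hmem))

section Translation

variable {G : Type*} [AddGroup G] [PseudoMetricSpace G] [IsIsometricVAdd G G]

theorem infDist_vadd_le_of_vadd_subset {s : Set G} {d : G} (h : d +ᵥ s ⊆ s) (x : G) :
    infDist (d +ᵥ x) s ≤ infDist x s := by
  rcases s.eq_empty_or_nonempty with rfl | hs
  · simp
  calc infDist (d +ᵥ x) s ≤ infDist (d +ᵥ x) (d +ᵥ s) := infDist_le_infDist_of_subset h hs.vadd_set
    _ = infDist x s := by simp only [infDist, infEDist_vadd]

theorem infDist_compl_le_vadd_of_vadd_subset {s : Set G} {d : G} (h : d +ᵥ s ⊆ s) (x : G) :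
    infDist x sᶜ ≤ infDist (d +ᵥ x) sᶜ := by
  simpa using infDist_vadd_le_of_vadd_subset (neg_vadd_compl_subset h) (d +ᵥ x)

theorem infDist_compl_sub_infDist_le_vadd {s : Set G} {d : G} (h : d +ᵥ s ⊆ s) (x : G) :
    infDist x sᶜ - infDist x s ≤ infDist (d +ᵥ x) sᶜ - infDist (d +ᵥ x) s := by
  linarith [infDist_vadd_le_of_vadd_subset h x, infDist_compl_le_vadd_of_vadd_subset h x]

end Translation

def coneAddOrthant {ι : Type*} [Fintype ι] {n : ℕ} (v : ι → EuclideanSpace ℝ (Fin n)) :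
    Set (EuclideanSpace ℝ (Fin n)) :=
  {z | ∃ (lam : ι → ℝ) (r : EuclideanSpace ℝ (Fin n)),
    (∀ j, 0 ≤ lam j) ∧ (∀ i, 0 ≤ r i) ∧ z = (∑ j, lam j • v j) + r}

theorem coneAddOrthant.add_mem {ι : Type*} [Fintype ι] {n : ℕ} {v : ι → EuclideanSpace ℝ (Fin n)}
    {u w : EuclideanSpace ℝ (Fin n)} (hu : u ∈ coneAddOrthant v) (hw : w ∈ coneAddOrthant v) :
    u + w ∈ coneAddOrthant v := by
  obtain ⟨l₁, r₁, hl₁, hr₁, rfl⟩ := hu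
  obtain ⟨l₂, r₂, hl₂, hr₂, rfl⟩ := hw
  refine ⟨l₁ + l₂, r₁ + r₂, fun j => add_nonneg (hl₁ j) (hl₂ j),
    fun i => by simpa using add_nonneg (hr₁ i) (hr₂ i), ?_⟩
  simp only [Pi.add_apply, add_smul, Finset.sum_add_distrib]
  abel

theorem coneAddOrthant.vadd_subset {ι : Type*} [Fintype ι] {n : ℕ}
    {v : ι → EuclideanSpace ℝ (Fin n)} {d : EuclideanSpace ℝ (Fin n)} (hd : d ∈ coneAddOrthant v) :
    d +ᵥ coneAddOrthant v ⊆ coneAddOrthant v := by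
  rintro _ ⟨y, hy, rfl⟩
  exact coneAddOrthant.add_mem hd hy

theorem stmt_3_general (p t : ℕ)
    (x : Fin t → EuclideanSpace ℝ (Fin p)) (xk : EuclideanSpace ℝ (Fin p))
    (E : Set (EuclideanSpace ℝ (Fin p)))
    (hE : E = {z | ∃ (lam : Fin t → ℝ) (r : EuclideanSpace ℝ (Fin p)),
        (∀ j, 0 ≤ lam j) ∧ (∀ i, 0 ≤ r i) ∧ z = (∑ j, lam j • (x j - xk)) + r})
    (ψ : EuclideanSpace ℝ (Fin p) → ℝ)
    (hψ : ∀ z, ψ z = Metric.infDist (z - xk) Eᶜ - Metric.infDist (z - xk) E) :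
    ∀ a b : EuclideanSpace ℝ (Fin p), b - a ∈ E → ψ a ≤ ψ b := by
  intro a b hba
  have hE_add : (b - a) +ᵥ E ⊆ E := by
    rw [hE] at hba ⊢
    exact coneAddOrthant.vadd_subset (v := fun j => x j - xk) hba
  have hb : b - xk = (b - a) +ᵥ (a - xk) := by rw [vadd_eq_add]; abel
  rw [hψ, hψ, hb]
  exact infDist_compl_sub_infDist_le_vadd hE_add (a - xk)

/-- ψ is increasing with respect to the cone E. -/
theorem stmt_3 (p t : ℕ) (hp : 1 ≤ p) (ht : 1 ≤ t)
    (x : Fin t → EuclideanSpace ℝ (Fin p)) (xk : EuclideanSpace ℝ (Fin p))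
    (E : Set (EuclideanSpace ℝ (Fin p)))
    (hE : E = {z | ∃ (lam : Fin t → ℝ) (r : EuclideanSpace ℝ (Fin p)),
        (∀ j, 0 ≤ lam j) ∧ (∀ i, 0 ≤ r i) ∧ z = (∑ j, lam j • (x j - xk)) + r})
    (hEne : E ≠ Set.univ)
    (ψ : EuclideanSpace ℝ (Fin p) → ℝ)
    (hψ : ∀ z, ψ z = Metric.infDist (z - xk) Eᶜ - Metric.infDist (z - xk) E) :
    ∀ a b : EuclideanSpace ℝ (Fin p), b - a ∈ E → ψ a ≤ ψ b :=
  stmt_3_general p t x xk E hE ψ hψ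
end

section
/- If there exists a function f : ℝ^p → ℝ that is increasing (x ≤ y componentwise implies f(x) ≤ f(y)) and quasi-concave (f(λx + (1−λ)y) ≥ min{f(x), f(y)} for all x, y ∈ ℝ^p and λ ∈ [0,1]) satisfying f(x_j) > f(x_k) for all j = 1, …, t, then the cone E is pointed. -/
/-!
If `z` and `-z` both lie in `E`, adding their representations gives
`∑ ν j • (x j - xk) + q = 0` with `ν ≥ 0` and `q ≥ 0`. If `ν ≠ 0`, the center of mass `u` of the
`x j` with weights `ν` equals `xk - (∑ ν)⁻¹ • q ≤ xk`, so `f u ≤ f xk` by monotonicity, whereas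
quasi-concavity keeps `u` in the convex strict superlevel set `{f > f xk}`. Hence `ν = 0`, and
then `z ≥ 0` and `-z ≥ 0` force `z = 0`.
-/

open Set Pointwise

open Finset in
theorem Finset.centerMass_eq_add_smul_sum_smul_sub {ι E : Type*} [AddCommGroup E] [Module ℝ E]
    {t : Finset ι} {w : ι → ℝ} (hw : ∑ i ∈ t, w i ≠ 0) (z : ι → E) (c : E) :
    t.centerMass w z = c + (∑ i ∈ t, w i)⁻¹ • ∑ i ∈ t, w i • (z i - c) := by
  simp only [centerMass, smul_sub, sum_sub_distrib, ← sum_smul, smul_smul,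
    inv_mul_cancel₀ hw, one_smul]
  abel

theorem QuasiconcaveOn.lt_map_centerMass {ι E : Type*} [AddCommGroup E] [Module ℝ E]
    {f : E → ℝ} (hf : QuasiconcaveOn ℝ univ f) {t : Finset ι} {w : ι → ℝ} {z : ι → E} {a : ℝ}
    (hw₀ : ∀ i ∈ t, 0 ≤ w i) (hw : 0 < ∑ i ∈ t, w i) (ha : ∀ i ∈ t, a < f (z i)) :
    a < f (t.centerMass w z) :=
  ((hf.convex_gt a).centerMass_mem hw₀ hw fun i hi => ⟨mem_univ _, ha i hi⟩).2

theorem quasiconcaveOn_univ_of_min_le {E : Type*} [AddCommGroup E] [Module ℝ E] {f : E → ℝ}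
    (hf : ∀ (a b : E) (lam : ℝ), 0 ≤ lam → lam ≤ 1 →
      min (f a) (f b) ≤ f (lam • a + (1 - lam) • b)) :
    QuasiconcaveOn ℝ univ f :=
  quasiconcaveOn_iff_min_le.2 ⟨convex_univ, fun a _ b _ μ ν hμ hν hμν => by
    obtain rfl : ν = 1 - μ := by linarith
    exact hf a b μ hμ (by linarith)⟩

theorem weights_eq_zero_of_sum_smul_sub_add_eq_zero {ι κ : Type*} [Fintype κ]
    {f : EuclideanSpace ℝ ι → ℝ} (hmono : ∀ a b : EuclideanSpace ℝ ι, (∀ i, a i ≤ b i) → f a ≤ f b)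
    (hf : QuasiconcaveOn ℝ univ f) {x : κ → EuclideanSpace ℝ ι} {y : EuclideanSpace ℝ ι}
    (hxy : ∀ j, f y < f (x j)) {ν : κ → ℝ} (hν : ∀ j, 0 ≤ ν j) {q : EuclideanSpace ℝ ι}
    (hq : ∀ i, 0 ≤ q i) (h : ∑ j, ν j • (x j - y) + q = 0) : ν = 0 := by
  by_contra hne
  have hpos : 0 < ∑ j, ν j := by
    refine (Finset.sum_nonneg fun j _ => hν j).lt_of_ne' fun h0 => hne ?_
    ext j
    exact (Finset.sum_eq_zero_iff_of_nonneg fun j _ => hν j).1 h0 j (Finset.mem_univ j)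
  have hcm : Finset.univ.centerMass ν x = y - (∑ j, ν j)⁻¹ • q := by
    rw [Finset.centerMass_eq_add_smul_sum_smul_sub hpos.ne' x y, eq_neg_of_add_eq_zero_left h,
      smul_neg, sub_eq_add_neg]
  have hle : f (Finset.univ.centerMass ν x) ≤ f y := hmono _ _ fun i => by
    rw [hcm]
    simpa using mul_nonneg (inv_nonneg.2 hpos.le) (hq i)
  exact hle.not_gt (hf.lt_map_centerMass (fun j _ => hν j) hpos fun j _ => hxy j)

theorem stmt_15_general (p t : ℕ)
    (x : Fin t → EuclideanSpace ℝ (Fin p)) (xk : EuclideanSpace ℝ (Fin p))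
    (E : Set (EuclideanSpace ℝ (Fin p)))
    (hE : E = {z | ∃ (lam : Fin t → ℝ) (r : EuclideanSpace ℝ (Fin p)),
        (∀ j, 0 ≤ lam j) ∧ (∀ i, 0 ≤ r i) ∧ z = (∑ j, lam j • (x j - xk)) + r})
    (f : EuclideanSpace ℝ (Fin p) → ℝ)
    (hmono : ∀ a b : EuclideanSpace ℝ (Fin p), (∀ i, a i ≤ b i) → f a ≤ f b)
    (hqc : ∀ (a b : EuclideanSpace ℝ (Fin p)) (lam : ℝ), 0 ≤ lam → lam ≤ 1 →
      min (f a) (f b) ≤ f (lam • a + (1 - lam) • b))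
    (hpref : ∀ j : Fin t, f xk < f (x j)) :
    E ∩ (-E) = {0} := by
  subst hE
  refine Subset.antisymm ?_ (singleton_subset_iff.2
    ⟨⟨0, 0, fun _ => le_rfl, fun _ => le_rfl, by simp⟩,
      ⟨0, 0, fun _ => le_rfl, fun _ => le_rfl, by simp⟩⟩)
  rintro z ⟨⟨lam, r, hlam, hr, rfl⟩, ⟨mu, s, hmu, hs, hz⟩⟩
  have hsum : ∑ j, (lam + mu) j • (x j - xk) + (r + s) = 0 := by
    simp only [Pi.add_apply, add_smul, Finset.sum_add_distrib]
    linear_combination (norm := module) -hz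
  have hzero := weights_eq_zero_of_sum_smul_sub_add_eq_zero hmono
    (quasiconcaveOn_univ_of_min_le hqc) hpref (fun j => add_nonneg (hlam j) (hmu j))
    (fun i => add_nonneg (hr i) (hs i)) hsum
  obtain ⟨rfl, rfl⟩ : lam = 0 ∧ mu = 0 := (add_eq_zero_iff_of_nonneg hlam hmu).1 hzero
  simp only [Pi.zero_apply, zero_smul, Finset.sum_const_zero, zero_add] at hz ⊢
  ext i
  have hzi : -r i = s i := by simpa using congrArg (· i) hz
  simpa using le_antisymm (by linarith [hs i]) (hr i)

/-- If there exists an increasing quasi-concave f : ℝ^p → ℝ with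
f(x_j) > f(x_k) for all j, then the cone E is pointed. -/
theorem stmt_15 (p t : ℕ) (hp : 1 ≤ p) (ht : 1 ≤ t)
    (x : Fin t → EuclideanSpace ℝ (Fin p)) (xk : EuclideanSpace ℝ (Fin p))
    (E : Set (EuclideanSpace ℝ (Fin p)))
    (hE : E = {z | ∃ (lam : Fin t → ℝ) (r : EuclideanSpace ℝ (Fin p)),
        (∀ j, 0 ≤ lam j) ∧ (∀ i, 0 ≤ r i) ∧ z = (∑ j, lam j • (x j - xk)) + r})
    (f : EuclideanSpace ℝ (Fin p) → ℝ)
    (hmono : ∀ a b : EuclideanSpace ℝ (Fin p), (∀ i, a i ≤ b i) → f a ≤ f b)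
    (hqc : ∀ (a b : EuclideanSpace ℝ (Fin p)) (lam : ℝ), 0 ≤ lam → lam ≤ 1 →
      min (f a) (f b) ≤ f (lam • a + (1 - lam) • b))
    (hpref : ∀ j : Fin t, f xk < f (x j)) :
    E ∩ (-E) = {0} :=
  stmt_15_general p t x xk E hE f hmono hqc hpref
end

section
/- The following are equivalent: (i) there exists a function f : ℝ^p → ℝ that is increasing (x ≤ y componentwise implies f(x) ≤ f(y)) and quasi-concave (f(λx + (1−λ)y) ≥ min{f(x), f(y)} for all x, y ∈ ℝ^p and λ ∈ [0,1]) with f(x_j) > f(x_k) for all j = 1, …, t; (ii) there exists a vector d ∈ ℝ^p with d > 0 componentwise such that the increasing linear function x ↦ ⟨d, x⟩ satisfies ⟨d, x_j⟩ > ⟨d, x_k⟩ for all j = 1, …, t. -/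
open Metric Set Pointwise RealInnerProductSpace

/-!
If `f` is increasing and quasi-concave with `f xk < f (x j)` for all `j`, then by
quasi-concavity every point of the convex hull `K` of the `x j` has value at least some
`f (x j)`, so by monotonicity `K` misses the closed convex set `{y | y ≤ xk}`. Strict
separation of the compact `K` from this set gives a vector `d` with `⟪d, xk⟫ < ⟪d, x j⟫`,
and since `⟪d, ·⟫` is bounded above on `{y | y ≤ xk}`, `d ≥ 0`. The strict inequalities are
open conditions on `d`, so `d + ε • 1` still satisfies them for small `ε > 0`.
Conversely a linear function with positive coefficients is increasing and concave.
-/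

theorem quasiconcaveOn_univ_iff_min_le {𝕜 E β : Type*} [Ring 𝕜] [PartialOrder 𝕜]
    [IsOrderedRing 𝕜] [AddCommMonoid E] [Module 𝕜 E] [LinearOrder β] {f : E → β} :
    QuasiconcaveOn 𝕜 univ f ↔
      ∀ (a b : E) (lam : 𝕜), 0 ≤ lam → lam ≤ 1 →
        min (f a) (f b) ≤ f (lam • a + (1 - lam) • b) := by
  rw [quasiconcaveOn_iff_min_le]
  refine ⟨fun h a b lam h0 h1 => h.2 trivial trivial h0 (sub_nonneg.2 h1) (add_sub_cancel lam 1),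
    fun h => ⟨convex_univ, fun a _ b _ s r hs hr hsr => ?_⟩⟩
  obtain rfl : r = 1 - s := eq_sub_of_add_eq' hsr
  exact h a b s hs (sub_nonneg.1 hr)

theorem QuasiconcaveOn.exists_le_of_mem_convexHull {𝕜 E β : Type*} [Semiring 𝕜] [PartialOrder 𝕜]
    [AddCommMonoid E] [Module 𝕜 E] [LinearOrder β] {f : E → β}
    (hf : QuasiconcaveOn 𝕜 univ f) {s : Set E} {y : E} (hy : y ∈ convexHull 𝕜 s) :
    ∃ z ∈ s, f z ≤ f y := by
  refine convexHull_min (t := {y | ∃ z ∈ s, f z ≤ f y}) (fun z hz => ⟨z, hz, le_rfl⟩) ?_ hy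
  rintro a ⟨za, hza, ha⟩ b ⟨zb, hzb, hb⟩ r q hr hq hrq
  have hmin := (quasiconcaveOn_iff_min_le.1 hf).2 (mem_univ a) (mem_univ b) hr hq hrq
  rcases le_total (f a) (f b) with hab | hab
  · exact ⟨za, hza, ha.trans (min_eq_left hab ▸ hmin)⟩
  · exact ⟨zb, hzb, hb.trans (min_eq_right hab ▸ hmin)⟩

namespace EuclideanSpace

variable {ι : Type*}

theorem convex_setOf_forall_apply_le (z : EuclideanSpace ℝ ι) :
    Convex ℝ {y : EuclideanSpace ℝ ι | ∀ i, y i ≤ z i} := by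
  intro a ha b hb s r hs hr hsr i
  have hz : s * z i + r * z i = z i := by rw [← add_mul, hsr, one_mul]
  simp only [PiLp.add_apply, PiLp.smul_apply, smul_eq_mul]
  nlinarith [ha i, hb i]

theorem isClosed_setOf_forall_apply_le (z : EuclideanSpace ℝ ι) :
    IsClosed {y : EuclideanSpace ℝ ι | ∀ i, y i ≤ z i} := by
  simp only [ofPred_forall]
  exact isClosed_iInter fun i => isClosed_le (proj i).continuous continuous_const

theorem inner_le_inner_of_forall_le [Fintype ι] {d a b : EuclideanSpace ℝ ι}
    (hd : ∀ i, 0 ≤ d i) (hab : ∀ i, a i ≤ b i) : ⟪d, a⟫ ≤ ⟪d, b⟫ := by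
  simp only [PiLp.inner_apply, RCLike.inner_apply, conj_trivial]
  gcongr with i
  exacts [hd i, hab i]

theorem nonneg_of_inner_lt_of_forall_apply_le [Fintype ι] {d z : EuclideanSpace ℝ ι} {u : ℝ}
    (h : ∀ y : EuclideanSpace ℝ ι, (∀ i, y i ≤ z i) → ⟪d, y⟫ < u) (i : ι) : 0 ≤ d i := by
  classical
  by_contra! hneg
  have hz := h z fun _ => le_rfl
  set c := (u - ⟪d, z⟫) / -d i
  have hc : 0 ≤ c := div_nonneg (by linarith) (by linarith)
  refine (h (z - c • single i 1) fun i' => ?_).ne ?_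
  · by_cases hi : i' = i <;> simp [hi, hc]
  · simp only [inner_sub_right, inner_smul_right, inner_single_right, Real.ringHom_apply,
      one_mul, c]
    rw [div_neg, neg_mul, div_mul_cancel₀ _ hneg.ne]
    ring

theorem exists_forall_pos_and_mem_of_isOpen [Fintype ι] {U : Set (EuclideanSpace ℝ ι)}
    (hU : IsOpen U) {d : EuclideanSpace ℝ ι} (hd : d ∈ U) (hnn : ∀ i, 0 ≤ d i) :
    ∃ d', (∀ i, 0 < d' i) ∧ d' ∈ U := by
  let ones : EuclideanSpace ℝ ι := WithLp.toLp 2 fun _ => 1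
  have hpath : Filter.Tendsto (fun ε : ℝ => d + ε • ones) (nhdsWithin 0 (Ioi 0)) (nhds d) := by
    have : Continuous fun ε : ℝ => d + ε • ones := by fun_prop
    simpa using (this.tendsto 0).mono_left nhdsWithin_le_nhds
  obtain ⟨ε, hεU, hε⟩ := ((hpath.eventually (hU.mem_nhds hd)).and self_mem_nhdsWithin).exists
  exact ⟨_, fun i => by simpa [ones] using add_pos_of_nonneg_of_pos (hnn i) hε, hεU⟩

theorem exists_forall_pos_inner_lt_of_quasiconcaveOn {κ : Type*} [Fintype ι] [Finite κ]
    {f : EuclideanSpace ℝ ι → ℝ}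
    (hmono : ∀ a b : EuclideanSpace ℝ ι, (∀ i, a i ≤ b i) → f a ≤ f b)
    (hf : QuasiconcaveOn ℝ univ f) {x : κ → EuclideanSpace ℝ ι} {z : EuclideanSpace ℝ ι}
    (hlt : ∀ j, f z < f (x j)) :
    ∃ d : EuclideanSpace ℝ ι, (∀ i, 0 < d i) ∧ ∀ j, ⟪d, z⟫ < ⟪d, x j⟫ := by
  have hdisj : Disjoint {y : EuclideanSpace ℝ ι | ∀ i, y i ≤ z i} (convexHull ℝ (range x)) := by
    refine disjoint_left.2 fun y hyz hy => ?_
    obtain ⟨_, ⟨j, rfl⟩, hj⟩ := hf.exists_le_of_mem_convexHull hy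
    exact (hlt j).not_ge (hj.trans (hmono y z hyz))
  obtain ⟨g, u, v, hlow, huv, hhull⟩ := geometric_hahn_banach_closed_compact
    (convex_setOf_forall_apply_le z) (isClosed_setOf_forall_apply_le z) (convex_convexHull ℝ _)
    ((finite_range x).isCompact_convexHull ℝ) hdisj
  set d := (InnerProductSpace.toDual ℝ (EuclideanSpace ℝ ι)).symm g
  have hd : ∀ y, ⟪d, y⟫ = g y := fun _ => InnerProductSpace.toDual_symm_apply
  have hsep : ∀ j, ⟪d, z⟫ < ⟪d, x j⟫ := fun j => by
    rw [hd, hd]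
    linarith [hlow z fun _ => le_rfl, hhull (x j) (subset_convexHull ℝ _ (mem_range_self j))]
  refine exists_forall_pos_and_mem_of_isOpen (U := {d | ∀ j, ⟪d, z⟫ < ⟪d, x j⟫}) ?_ hsep
    (nonneg_of_inner_lt_of_forall_apply_le fun y hy => (hd y).trans_lt (hlow y hy))
  simp only [ofPred_forall]
  exact isOpen_iInter_of_finite fun j => isOpen_lt (by fun_prop) (by fun_prop)

end EuclideanSpace

theorem stmt_17_general (p t : ℕ)
    (x : Fin t → EuclideanSpace ℝ (Fin p)) (xk : EuclideanSpace ℝ (Fin p)) :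
    (∃ f : EuclideanSpace ℝ (Fin p) → ℝ,
      (∀ a b : EuclideanSpace ℝ (Fin p), (∀ i, a i ≤ b i) → f a ≤ f b) ∧
      (∀ (a b : EuclideanSpace ℝ (Fin p)) (lam : ℝ), 0 ≤ lam → lam ≤ 1 →
        min (f a) (f b) ≤ f (lam • a + (1 - lam) • b)) ∧
      (∀ j : Fin t, f xk < f (x j))) ↔
    (∃ d : EuclideanSpace ℝ (Fin p),
      (∀ i, 0 < d i) ∧ ∀ j : Fin t, ⟪d, xk⟫ < ⟪d, x j⟫) := by
  constructor
  · rintro ⟨f, hmono, hqc, hlt⟩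
    exact EuclideanSpace.exists_forall_pos_inner_lt_of_quasiconcaveOn hmono
      (quasiconcaveOn_univ_iff_min_le.2 hqc) hlt
  · rintro ⟨d, hd, hlt⟩
    refine ⟨fun y => ⟪d, y⟫, fun a b => EuclideanSpace.inner_le_inner_of_forall_le
      fun i => (hd i).le, quasiconcaveOn_univ_iff_min_le.1 ?_, hlt⟩
    exact ((innerₛₗ ℝ d).concaveOn convex_univ).quasiconcaveOn

/-- There exists an increasing quasi-concave f : ℝ^p → ℝ with
f(x_j) > f(x_k) for all j, iff there exists d > 0 componentwise such that the
increasing linear function x ↦ ⟨d, x⟩ satisfies ⟨d, x_j⟩ > ⟨d, x_k⟩ for all j. -/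
theorem stmt_17 (p t : ℕ) (hp : 1 ≤ p) (ht : 1 ≤ t)
    (x : Fin t → EuclideanSpace ℝ (Fin p)) (xk : EuclideanSpace ℝ (Fin p)) :
    (∃ f : EuclideanSpace ℝ (Fin p) → ℝ,
      (∀ a b : EuclideanSpace ℝ (Fin p), (∀ i, a i ≤ b i) → f a ≤ f b) ∧
      (∀ (a b : EuclideanSpace ℝ (Fin p)) (lam : ℝ), 0 ≤ lam → lam ≤ 1 →
        min (f a) (f b) ≤ f (lam • a + (1 - lam) • b)) ∧
      (∀ j : Fin t, f xk < f (x j))) ↔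
    (∃ d : EuclideanSpace ℝ (Fin p),
      (∀ i, 0 < d i) ∧ ∀ j : Fin t, ⟪d, xk⟫ < ⟪d, x j⟫) :=
  stmt_17_general p t x xk
end
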